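/- arXiv:1908.08200 — 3 statements merged into one kernel-verified Lean document; each statement's English description precedes it below -/
import Mathlib

section
/- Define the tetration sequence tet : ℕ → ℝ by tet(0) = 1 and tet(n+1) = exp(tet(n)). Let v > 0, let s ≥ 1 be a real number, and let h ≥ 1 be an integer. For j ≥ 0 set M_j² = 3v·tet(j) + 2v·ln(s). Then 3v + 2v·ln(s) + 2s·Σ_{j=1}^{h−1} M_j²·exp(−M_{j−1}²/(2v)) ≤ 9v + 3v·ln(s). -/
private lemma geom_strong (a : ℕ → ℝ) (r : ℝ) (m : ℕ)
    (hrec : ∀ n, m ≤ n → a (n + 1) ≤ r * a n) :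
    ∀ N, m ≤ N → (1 - r) * ∑ n ∈ Finset.Icc m N, a n ≤ a m - r * a N := by
  intro N hN
  induction N, hN using Nat.le_induction with
  | base => rw [Finset.Icc_self, Finset.sum_singleton]; ring_nf; exact le_refl _
  | succ N hN ih =>
      rw [Finset.sum_Icc_succ_top (Nat.le_succ_of_le hN)]
      have h1 := hrec N hN
      nlinarith [ih]

private lemma geom_weak (a : ℕ → ℝ) (r : ℝ) (hr0 : 0 ≤ r) (hr1 : r < 1) (m N : ℕ)
    (ha : ∀ n, 0 ≤ a n) (hrec : ∀ n, m ≤ n → a (n + 1) ≤ r * a n) :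
    (1 - r) * ∑ n ∈ Finset.Icc m N, a n ≤ a m := by
  rcases le_or_gt m N with hmN | hmN
  · have := geom_strong a r m hrec N hmN
    nlinarith [ha N]
  · rw [Finset.Icc_eq_empty (by omega), Finset.sum_empty, mul_zero]
    exact ha m

private lemma exp_half_ge : (1.648 : ℝ) ≤ Real.exp (1/2) := by
  have := Real.sum_le_exp_of_nonneg (x := 1/2) (by norm_num) 5
  norm_num [Finset.sum_range_succ, Nat.factorial] at this
  linarith

private lemma exp_1359_ge : (3.84 : ℝ) ≤ Real.exp (1.359) := by
  have := Real.sum_le_exp_of_nonneg (x := 1.359) (by norm_num) 5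
  norm_num [Finset.sum_range_succ, Nat.factorial] at this
  linarith

private lemma exp_32_ge : (4.45 : ℝ) ≤ Real.exp (3/2) := by
  have := Real.sum_le_exp_of_nonneg (x := 3/2) (by norm_num) 8
  norm_num [Finset.sum_range_succ, Nat.factorial] at this
  linarith

private lemma exp_52_ge : (10 : ℝ) ≤ Real.exp (5/2) := by
  have := Real.sum_le_exp_of_nonneg (x := 5/2) (by norm_num) 6
  norm_num [Finset.sum_range_succ, Nat.factorial] at this
  linarith

private lemma taylor4 (t : ℝ) (ht : 0 ≤ t) : 1 + t + t^2/2 + t^3/6 ≤ Real.exp t := by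
  have := Real.sum_le_exp_of_nonneg ht 4
  norm_num [Finset.sum_range_succ, Nat.factorial] at this
  
  linarith

private lemma exp_sub_self_ge_one (t : ℝ) (ht : 1 ≤ t) : t + 5/3 ≤ Real.exp t := by
  have h := taylor4 t (by linarith)
  nlinarith [sq_nonneg (t-1), sq_nonneg t]

private lemma exp_sub_self_ge_two (t : ℝ) (ht : 2.7 ≤ t) : t + 5 ≤ Real.exp t := by
  have h := taylor4 t (by linarith)
  nlinarith [sq_nonneg (t-2.7), sq_nonneg t]



/-- The analytic core of the mean square error bound for ATUQ on subgaussian inputs: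
with tetra-iterated dynamic ranges `M j ^ 2 = 3v·tet j + 2v·ln s`, the accumulated overflow
contribution satisfies
`3v + 2v·ln s + 2s·Σ_{j=1}^{h-1} M j ² · exp(-M (j-1) ² / (2v)) ≤ 9v + 3v·ln s`. -/
theorem atuq_overflow_bound
    (tet : ℕ → ℝ) (h0 : tet 0 = 1) (hsucc : ∀ n, tet (n + 1) = Real.exp (tet n))
    (v s : ℝ) (hv : 0 < v) (hs : 1 ≤ s)
    (h : ℕ) (hh : 1 ≤ h)
    (Msq : ℕ → ℝ) (hMsq : ∀ j, Msq j = 3 * v * tet j + 2 * v * Real.log s) :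
    3 * v + 2 * v * Real.log s
        + 2 * s * ∑ j ∈ Finset.Icc 1 (h - 1), Msq j * Real.exp (-(Msq (j - 1)) / (2 * v))
      ≤ 9 * v + 3 * v * Real.log s := by
  have hs0 : (0:ℝ) < s := by linarith
  set L := Real.log s with hLdef
  have hL : 0 ≤ L := Real.log_nonneg hs
  -- tet is at least 1 everywhere
  have htet1 : ∀ n, 1 ≤ tet n := by
    intro n
    induction n with
    | zero => rw [h0]
    | succ n ih =>
        rw [hsucc n]
        have := Real.add_one_le_exp (tet n)
        linarith
  -- tet n ≥ 2.7 for n ≥ 1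
  have htet27 : ∀ n, 1 ≤ n → (2.7:ℝ) ≤ tet n := by
    intro n hn
    obtain ⟨m, rfl⟩ := Nat.exists_eq_add_of_le hn
    rw [add_comm, hsucc m]
    have h1 : Real.exp 1 ≤ Real.exp (tet m) := Real.exp_le_exp.mpr (htet1 m)
    have h2 := Real.exp_one_gt_d9
    linarith
  set a : ℕ → ℝ := fun j => Real.exp (-tet (j - 1) / 2) with ha_def
  set b : ℕ → ℝ := fun j => Real.exp (-(3 * tet (j - 1)) / 2) with hb_def
  have ha_pos : ∀ n, 0 ≤ a n := fun n => (Real.exp_pos _).le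
  have hb_pos : ∀ n, 0 ≤ b n := fun n => (Real.exp_pos _).le
  -- rewrite each summand
  have hsum : 2 * s * ∑ j ∈ Finset.Icc 1 (h - 1), Msq j * Real.exp (-(Msq (j - 1)) / (2 * v))
      = ∑ j ∈ Finset.Icc 1 (h - 1), (6 * v * a j + 4 * v * L * b j) := by
    rw [Finset.mul_sum]
    refine Finset.sum_congr rfl ?_
    intro j hj
    have hj1 : 1 ≤ j := (Finset.mem_Icc.mp hj).1
    have hjj : j - 1 + 1 = j := Nat.succ_pred_eq_of_pos hj1
    have htj : tet j = Real.exp (tet (j - 1)) := by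
      conv_lhs => rw [← hjj]
      rw [hsucc]
    rw [hMsq j, hMsq (j - 1), htj]
    set t := tet (j - 1) with ht_def
    have hdiv : -(3 * v * t + 2 * v * L) / (2 * v)
        = -(3 * t) / 2 + -L := by
      field_simp
      ring
    rw [hdiv, Real.exp_add]
    have hexpL : Real.exp (-L) = s⁻¹ := by
      rw [Real.exp_neg, Real.exp_log hs0]
    rw [hexpL]
    have key : Real.exp t * Real.exp (-(3 * t) / 2) = Real.exp (-t / 2) := by
      rw [← Real.exp_add]; congr 1; ring
    have hss : s * s⁻¹ = 1 := mul_inv_cancel₀ (ne_of_gt hs0)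
    have haj : a j = Real.exp (-t / 2) := rfl
    have hbj : b j = Real.exp (-(3 * t) / 2) := rfl
    rw [haj, hbj]
    calc 2 * s * ((3 * v * Real.exp t + 2 * v * L) * (Real.exp (-(3 * t) / 2) * s⁻¹))
        = (s * s⁻¹) * (6 * v * (Real.exp t * Real.exp (-(3 * t) / 2))
            + 4 * v * L * Real.exp (-(3 * t) / 2)) := by ring
      _ = 6 * v * Real.exp (-t / 2) + 4 * v * L * Real.exp (-(3 * t) / 2) := by
          rw [hss, key, one_mul]
  -- recurrence for b with ratio 1/10, from m = 1
  have hb_rec : ∀ n, 1 ≤ n → b (n + 1) ≤ (1/10) * b n := by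
    intro n hn
    have hnn : n - 1 + 1 = n := Nat.succ_pred_eq_of_pos hn
    have htn : tet n = Real.exp (tet (n - 1)) := by
      conv_lhs => rw [← hnn]
      rw [hsucc]
    have hbn1 : b (n + 1) = Real.exp (-(3 * tet n) / 2) := by
      simp only [hb_def, Nat.add_sub_cancel]
    rw [hbn1, htn]
    set u := tet (n - 1) with hu_def
    have hu : 1 ≤ u := htet1 _
    have hdiff : Real.exp u - u ≥ 5/3 := by
      have := exp_sub_self_ge_one u hu
      linarith
    have h10 : (10:ℝ) ≤ Real.exp ((3/2) * (Real.exp u - u)) := by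
      calc (10:ℝ) ≤ Real.exp (5/2) := exp_52_ge
        _ ≤ _ := Real.exp_le_exp.mpr (by linarith)
    have hsplit : Real.exp (-(3 * Real.exp u) / 2)
        = Real.exp (-(3 * u) / 2) * (Real.exp ((3/2) * (Real.exp u - u)))⁻¹ := by
      rw [← Real.exp_neg, ← Real.exp_add]
      congr 1; ring
    rw [hsplit]
    have hXpos : (0:ℝ) < Real.exp ((3/2) * (Real.exp u - u)) := Real.exp_pos _
    have hinv : (Real.exp ((3/2) * (Real.exp u - u)))⁻¹ ≤ 1/10 := by
      rw [inv_le_comm₀ (by positivity) (by norm_num)]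
      linarith
    have : b n = Real.exp (-(3 * u) / 2) := rfl
    rw [this]
    nlinarith [Real.exp_pos (-(3 * u) / 2)]
  -- recurrence for a with ratio 1/10, from m = 2
  have ha_rec : ∀ n, 2 ≤ n → a (n + 1) ≤ (1/10) * a n := by
    intro n hn
    have hnn : n - 1 + 1 = n := by omega
    have htn : tet n = Real.exp (tet (n - 1)) := by
      conv_lhs => rw [← hnn]
      rw [hsucc]
    have han1 : a (n + 1) = Real.exp (-tet n / 2) := by
      simp only [ha_def, Nat.add_sub_cancel]
    rw [han1, htn]
    set u := tet (n - 1) with hu_def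
    have hu : (2.7:ℝ) ≤ u := htet27 (n-1) (by omega)
    have hdiff : Real.exp u - u ≥ 5 := by
      have := exp_sub_self_ge_two u hu
      linarith
    have h10 : (10:ℝ) ≤ Real.exp ((1/2) * (Real.exp u - u)) := by
      calc (10:ℝ) ≤ Real.exp (5/2) := exp_52_ge
        _ ≤ _ := Real.exp_le_exp.mpr (by linarith)
    have hsplit : Real.exp (-Real.exp u / 2)
        = Real.exp (-u / 2) * (Real.exp ((1/2) * (Real.exp u - u)))⁻¹ := by
      rw [← Real.exp_neg, ← Real.exp_add]
      congr 1; ring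
    rw [hsplit]
    have hinv : (Real.exp ((1/2) * (Real.exp u - u)))⁻¹ ≤ 1/10 := by
      rw [inv_le_comm₀ (by positivity) (by norm_num)]
      linarith
    have : a n = Real.exp (-u / 2) := rfl
    rw [this]
    nlinarith [Real.exp_pos (-u / 2)]
  -- numeric bounds on a 1, a 2, b 1
  have hexp_neg_le : ∀ x c : ℝ, 0 < c → c ≤ Real.exp x → Real.exp (-x) ≤ c⁻¹ := by
    intro x c hc hx
    rw [Real.exp_neg]
    exact inv_anti₀ hc hx
  have ha1 : a 1 ≤ (1.648:ℝ)⁻¹ := by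
    have h1 : a 1 = Real.exp (-(1/2 : ℝ)) := by
      simp only [ha_def]
      rw [h0]
      norm_num
    rw [h1]
    exact hexp_neg_le _ _ (by norm_num) exp_half_ge
  have ha2 : a 2 ≤ (3.84:ℝ)⁻¹ := by
    have ht1 : tet 1 = Real.exp 1 := by rw [hsucc 0, h0]
    have h1 : a 2 = Real.exp (-(tet 1 / 2)) := by
      simp only [ha_def]
      norm_num
      ring_nf
    have h2 : Real.exp (-(tet 1 / 2)) ≤ Real.exp (-(1.359:ℝ)) := by
      apply Real.exp_le_exp.mpr
      have := Real.exp_one_gt_d9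
      rw [ht1]
      linarith
    rw [h1]
    exact le_trans h2 (hexp_neg_le _ _ (by norm_num) exp_1359_ge)
  have hb1 : b 1 ≤ (4.45:ℝ)⁻¹ := by
    have h1 : b 1 = Real.exp (-(3/2 : ℝ)) := by
      simp only [hb_def]
      rw [h0]
      norm_num
    rw [h1]
    exact hexp_neg_le _ _ (by norm_num) exp_32_ge
  -- sum bounds
  have SB : ∑ j ∈ Finset.Icc 1 (h - 1), b j ≤ 1/4 := by
    have hg := geom_weak b (1/10) (by norm_num) (by norm_num) 1 (h-1) hb_pos hb_rec
    norm_num at hg hb1 ⊢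
    linarith
  have SA : ∑ j ∈ Finset.Icc 1 (h - 1), a j ≤ 1 := by
    rcases Nat.lt_or_ge (h - 1) 1 with h1 | h1
    · rw [Finset.Icc_eq_empty (by omega), Finset.sum_empty]
      norm_num
    · have hsplit : Finset.Icc 1 (h-1) = insert 1 (Finset.Icc 2 (h-1)) := by
        ext x
        simp only [Finset.mem_Icc, Finset.mem_insert]
        omega
      rw [hsplit, Finset.sum_insert (by simp [Finset.mem_Icc])]
      have hg := geom_weak a (1/10) (by norm_num) (by norm_num) 2 (h-1) ha_pos ha_rec
      norm_num at hg ha1 ha2 ⊢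
      linarith
  -- assemble
  rw [hsum]
  have hdistrib : ∑ j ∈ Finset.Icc 1 (h - 1), (6 * v * a j + 4 * v * L * b j)
      = 6 * v * (∑ j ∈ Finset.Icc 1 (h - 1), a j)
        + 4 * v * L * (∑ j ∈ Finset.Icc 1 (h - 1), b j) := by
    rw [Finset.sum_add_distrib, Finset.mul_sum, Finset.mul_sum]
  rw [hdistrib]
  have t1 : 6 * v * (∑ j ∈ Finset.Icc 1 (h - 1), a j) ≤ 6 * v := by
    nlinarith
  have t2 : 4 * v * L * (∑ j ∈ Finset.Icc 1 (h - 1), b j) ≤ v * L := by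
    have hb_sum_nonneg : 0 ≤ ∑ j ∈ Finset.Icc 1 (h - 1), b j :=
      Finset.sum_nonneg fun j _ => hb_pos j
    nlinarith [mul_nonneg hv.le hL]
  linarith
end

section
/- Let a, b, c be real numbers with 0 < a < c and b > 1. Then the supremum of a·b^{−1/(2+y)} over all y ∈ [0, 1] satisfying a·b^{y/(2+y)} < c equals min{ √(c·a/b), a·b^{−1/3} }. -/
/-- Elementary optimization identity (Lemma 7 of the paper): for `0 < a < c` and `b > 1`,
the supremum of `a·b^(-1/(2+y))` over `y ∈ [0,1]` with `a·b^(y/(2+y)) < c` equals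
`min (√(ca/b)) (a·b^(-1/3))`. -/
theorem elementary_sup_identity
    (a b c : ℝ) (ha : 0 < a) (hac : a < c) (hb : 1 < b) :
    sSup ((fun y : ℝ => a * b ^ (-(1 / (2 + y)))) ''
        {y : ℝ | y ∈ Set.Icc (0 : ℝ) 1 ∧ a * b ^ (y / (2 + y)) < c})
      = min (Real.sqrt (c * a / b)) (a * b ^ (-(1 / 3) : ℝ)) := by
  have hb0 : (0:ℝ) < b := one_pos.trans hb
  set f : ℝ → ℝ := fun y : ℝ => a * b ^ (-(1 / (2 + y))) with hf
  set S := (f '' {y : ℝ | y ∈ Set.Icc (0 : ℝ) 1 ∧ a * b ^ (y / (2 + y)) < c}) with hS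
  have hmem0 : f 0 ∈ S := ⟨0, ⟨⟨le_refl _, zero_le_one⟩, by
    norm_num [Real.rpow_zero]; exact hac⟩, rfl⟩
  apply csSup_eq_of_forall_le_of_forall_lt_exists_gt ⟨f 0, hmem0⟩
  · rintro x ⟨y, ⟨⟨hy0, hy1⟩, hyc⟩, rfl⟩
    have h2y : (0:ℝ) < 2 + y := by linarith
    have hfy0 : 0 ≤ f y := by positivity
    refine le_min ?_ ?_
    · have hX : b ^ (-(1 / (2 + y))) * b ^ (-(1 / (2 + y))) = b ^ (y/(2+y)) / b := by
        rw [← Real.rpow_add hb0,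
          show -(1/(2+y)) + -(1/(2+y)) = y/(2+y) - 1 by field_simp; ring,
          Real.rpow_sub hb0, Real.rpow_one]
      have hsq : (f y)^2 ≤ c * a / b := by
        have h1 : (f y)^2 = a * (a * b ^ (y / (2 + y))) / b := by
          simp only [hf]
          rw [pow_two,
            show a * b ^ (-(1 / (2 + y))) * (a * b ^ (-(1 / (2 + y))))
              = a * a * (b ^ (-(1 / (2 + y))) * b ^ (-(1 / (2 + y)))) by ring, hX]
          ring
        rw [h1, show c * a / b = a * c / b by ring]
        gcongr
      calc f y = Real.sqrt ((f y)^2) := (Real.sqrt_sq hfy0).symm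
        _ ≤ Real.sqrt (c * a / b) := Real.sqrt_le_sqrt hsq
    · have hexp : -(1 / (2 + y)) ≤ (-(1 / 3) : ℝ) := by
        rw [neg_le_neg_iff]
        exact one_div_le_one_div_of_le h2y (by linarith)
      exact mul_le_mul_of_nonneg_left
        ((Real.rpow_le_rpow_left_iff hb).mpr hexp) ha.le
  · intro w hw
    rcases lt_or_ge (a * b ^ ((1:ℝ)/3)) c with hca | hca
    · -- y = 1 is feasible
      refine ⟨f 1, ⟨1, ⟨⟨zero_le_one, le_refl _⟩, by norm_num; exact hca⟩, rfl⟩, ?_⟩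
      have : f 1 = a * b ^ (-(1/3) : ℝ) := by norm_num [hf]
      rw [this]
      exact hw.trans_le (min_le_right _ _)
    · -- c ≤ a * b^(1/3) : sup is sqrt(c*a/b)
      have hca' : (1:ℝ) < c / a := (one_lt_div ha).mpr hac
      set T := Real.logb b (c/a) with hT
      have hbT : b ^ T = c / a := Real.rpow_logb hb0 hb.ne' (by positivity)
      have hT0 : 0 < T := Real.logb_pos hb hca'
      have hT13 : T ≤ 1/3 := by
        rw [← Real.rpow_le_rpow_left_iff (x := b) hb, hbT]
        rw [div_le_iff₀ ha]
        linarith [hca]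
      -- the sup value
      have hgT : a * b ^ ((T - 1)/2) = Real.sqrt (c * a / b) := by
        have hsq : (a * b ^ ((T - 1)/2))^2 = c * a / b := by
          rw [pow_two, show a * b ^ ((T-1)/2) * (a * b ^ ((T-1)/2))
            = a * a * (b ^ ((T-1)/2) * b ^ ((T-1)/2)) by ring,
            ← Real.rpow_add hb0, show (T-1)/2 + (T-1)/2 = T - 1 by ring,
            Real.rpow_sub hb0, Real.rpow_one, hbT]
          field_simp
        rw [← hsq, Real.sqrt_sq (by positivity)]
      have hmin : min (Real.sqrt (c * a / b)) (a * b ^ (-(1 / 3) : ℝ))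
          = Real.sqrt (c * a / b) := by
        apply min_eq_left
        rw [← hgT]
        apply mul_le_mul_of_nonneg_left _ ha.le
        apply (Real.rpow_le_rpow_left_iff hb).mpr
        linarith
      rw [hmin] at hw
      -- continuity argument: g t = a * b^((t-1)/2) tends to sqrt(c*a/b) as t → T⁻
      have hcont : Continuous (fun t : ℝ => a * b ^ ((t - 1)/2)) := by
        have : (fun t : ℝ => a * b ^ ((t - 1)/2))
            = fun t : ℝ => a * Real.exp (Real.log b * ((t - 1)/2)) := by
          funext t
          rw [Real.rpow_def_of_pos hb0]
        rw [this]
        fun_prop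
      have htend : Filter.Tendsto (fun t : ℝ => a * b ^ ((t - 1)/2))
          (nhdsWithin T (Set.Iio T)) (nhds (a * b ^ ((T - 1)/2))) :=
        (hcont.tendsto T).mono_left nhdsWithin_le_nhds
      have hev1 : ∀ᶠ t in nhdsWithin T (Set.Iio T), w < a * b ^ ((t - 1)/2) :=
        htend.eventually (lt_mem_nhds (by rw [hgT]; exact hw))
      have hev2 : ∀ᶠ t in nhdsWithin T (Set.Iio T), t ∈ Set.Ioo 0 T :=
        Filter.eventually_of_mem (Ioo_mem_nhdsLT_of_mem ⟨hT0, le_refl T⟩) fun _ h => h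
      obtain ⟨t, hwt, ht0, htT⟩ := (hev1.and hev2).exists
      set y := 2 * t / (1 - t) with hy
      have ht13 : t < 1/3 := lt_of_lt_of_le htT hT13
      have h1t : 0 < 1 - t := by linarith
      have hy0 : 0 ≤ y := by positivity
      have hy1 : y ≤ 1 := by
        rw [hy, div_le_one h1t]; linarith
      have h2y : 2 + y = 2 / (1 - t) := by
        rw [hy]; field_simp; ring
      have hyt : y / (2 + y) = t := by
        rw [hy, h2y]; field_simp
      have hexp : -(1 / (2 + y)) = (t - 1)/2 := by
        rw [h2y]; field_simp; ring
      refine ⟨f y, ⟨y, ⟨⟨hy0, hy1⟩, ?_⟩, rfl⟩, ?_⟩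
      · rw [hyt]
        have : b ^ t < b ^ T := (Real.rpow_lt_rpow_left_iff hb).mpr htT
        rw [hbT] at this
        calc a * b ^ t < a * (c / a) := by
              exact mul_lt_mul_of_pos_left this ha
          _ = c := by field_simp
      · simp only [hf]
        rw [hexp]
        exact hwt
end

section
/- On a probability space, let Y be an ℝ^d-valued random vector with P(Y = 0) = 0, let G be an integrable real random variable and S an integrable ℝ^d-valued random vector such that G and S are conditionally independent given the σ-algebra σ(Y) generated by Y, G·S is integrable, and E[S | σ(Y)] = Y/‖Y‖₂ almost surely. Then ‖E[G·S − Y]‖₂ ≤ E[ |E[G | σ(Y)] − ‖Y‖₂| ]. -/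
open MeasureTheory ProbabilityTheory

lemma condexp_mul_of_condIndepFun
    {Ω : Type*} {mΩ : MeasurableSpace Ω} [StandardBorelSpace Ω]
    (μ : Measure Ω) [IsProbabilityMeasure μ]
    {m : MeasurableSpace Ω} (hm : m ≤ mΩ)
    {f g : Ω → ℝ} (hf : Measurable[mΩ] f) (hg : Measurable[mΩ] g)
    (hfint : Integrable f μ) (hgint : Integrable g μ)
    (hfgint : Integrable (fun ω => f ω * g ω) μ)
    (hindep : CondIndepFun m hm f g μ) :
    μ[fun ω => f ω * g ω | m] =ᵐ[μ] fun ω => (μ[f|m]) ω * (μ[g|m]) ω := by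
  set κ := condExpKernel (mΩ := mΩ) μ m with hκ
  have h_sets : ∀ q r : ℚ, ∀ᵐ ω ∂μ,
      κ ω (f ⁻¹' Set.Iic (q:ℝ) ∩ g ⁻¹' Set.Iic (r:ℝ))
        = κ ω (f ⁻¹' Set.Iic (q:ℝ)) * κ ω (g ⁻¹' Set.Iic (r:ℝ)) := by
    intro q r
    refine ae_of_ae_trim hm ?_
    exact Kernel.IndepFun.measure_inter_preimage_eq_mul hindep _ _
      measurableSet_Iic measurableSet_Iic
  have h_all : ∀ᵐ ω ∂μ, IndepFun f g (κ ω) := by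
    have h := ae_all_iff.2 fun q : ℚ => ae_all_iff.2 fun r : ℚ => h_sets q r
    filter_upwards [h] with ω hω
    have : IsProbabilityMeasure (κ ω) := IsMarkovKernel.isProbabilityMeasure ω
    refine IndepSets.indep hf.comap_le hg.comap_le
      (Real.isPiSystem_Iic_rat.comap f) (Real.isPiSystem_Iic_rat.comap g) ?_ ?_ ?_
    · rw [show Real.measurableSpace = borel ℝ from rfl,
        Real.borel_eq_generateFrom_Iic_rat, MeasurableSpace.comap_generateFrom]
      congr 1
    · rw [show Real.measurableSpace = borel ℝ from rfl,
        Real.borel_eq_generateFrom_Iic_rat, MeasurableSpace.comap_generateFrom]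
      congr 1
    · rintro s t ⟨s', hs', rfl⟩ ⟨t', ht', rfl⟩
      simp only [Set.mem_iUnion, Set.mem_singleton_iff] at hs' ht'
      obtain ⟨q, rfl⟩ := hs'
      obtain ⟨r, rfl⟩ := ht'
      exact ae_of_all _ fun _ => hω q r
  have hκfg := condExp_ae_eq_integral_condExpKernel (mΩ := mΩ) hm hfgint
  have hκf := condExp_ae_eq_integral_condExpKernel (mΩ := mΩ) hm hfint
  have hκg := condExp_ae_eq_integral_condExpKernel (mΩ := mΩ) hm hgint
  filter_upwards [hκfg, hκf, hκg, h_all] with ω h1 h2 h3 h4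
  rw [h1, h2, h3]
  exact IndepFun.integral_mul_eq_mul_integral h4 hf.aestronglyMeasurable hg.aestronglyMeasurable

theorem gain_shape_bias_aux
    {Ω : Type*} {m : MeasurableSpace Ω} {mΩ : MeasurableSpace Ω} [StandardBorelSpace Ω]
    (μ : Measure Ω) [IsProbabilityMeasure μ]
    {d : ℕ}
    (hm : m ≤ mΩ)
    (Y : Ω → EuclideanSpace ℝ (Fin d)) (hY : Measurable[mΩ] Y)
    (hY0 : μ {ω | Y ω = 0} = 0)
    (G : Ω → ℝ) (S : Ω → EuclideanSpace ℝ (Fin d))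
    (hG : Measurable[mΩ] G) (hS : Measurable[mΩ] S)
    (hGint : Integrable G μ) (hSint : Integrable S μ) (hYint : Integrable Y μ)
    (hindep : CondIndepFun m hm G S μ)
    (hGSint : Integrable (fun ω => G ω • S ω) μ)
    (hScond : μ[S | m] =ᵐ[μ] fun ω => ‖Y ω‖⁻¹ • Y ω) :
    ‖∫ ω, (G ω • S ω - Y ω) ∂μ‖
      ≤ ∫ ω, |(μ[G | m]) ω - ‖Y ω‖| ∂μ := by
  set EG := μ[G | m] with hEG_def
  -- a.e. Y ≠ 0
  have hYne : ∀ᵐ ω ∂μ, Y ω ≠ 0 := by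
    rw [ae_iff]
    simpa using hY0
  -- component measurability / integrability
  have hSi_meas : ∀ i, Measurable[mΩ] fun ω => S ω i := fun i =>
    ((EuclideanSpace.proj (𝕜 := ℝ) i).continuous.measurable).comp hS
  have hSi_int : ∀ i, Integrable (fun ω => S ω i) μ := fun i => by
    simpa using (ContinuousLinearMap.integrable_comp (EuclideanSpace.proj (𝕜 := ℝ) i) hSint)
  have hYi_int : ∀ i, Integrable (fun ω => Y ω i) μ := fun i => by
    simpa using (ContinuousLinearMap.integrable_comp (EuclideanSpace.proj (𝕜 := ℝ) i) hYint)
  have hGSi_int : ∀ i, Integrable (fun ω => G ω * S ω i) μ := fun i => by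
    have := ContinuousLinearMap.integrable_comp (EuclideanSpace.proj (𝕜 := ℝ) i) hGSint
    simpa [smul_eq_mul] using this
  -- conditional independence of G and S i
  have hindep_i : ∀ i, CondIndepFun m hm G (fun ω => S ω i) μ := fun i =>
    hindep.comp measurable_id (EuclideanSpace.proj (𝕜 := ℝ) i).continuous.measurable
  -- product rule
  have hprod : ∀ i, μ[fun ω => G ω * S ω i | m]
      =ᵐ[μ] fun ω => EG ω * (μ[fun ω' => S ω' i | m]) ω :=
    fun i => condexp_mul_of_condIndepFun μ hm hG (hSi_meas i) hGint (hSi_int i)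
      (hGSi_int i) (hindep_i i)
  -- conditional expectation of the components of S
  have hSi_cond : ∀ i, μ[fun ω => S ω i | m] =ᵐ[μ] fun ω => ‖Y ω‖⁻¹ * Y ω i := by
    intro i
    have h1 := condExp_ae_eq_integral_condExpKernel (mΩ := mΩ) hm hSint
    have h2 := condExp_ae_eq_integral_condExpKernel (mΩ := mΩ) hm (hSi_int i)
    have h3 := hSint.condExpKernel_ae (mΩ := mΩ) (m := m)
    filter_upwards [h1, h2, h3, hScond] with ω e1 e2 e3 e4
    have hproj : ∫ y, S y i ∂(condExpKernel (mΩ := mΩ) μ m ω)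
        = (∫ y, S y ∂(condExpKernel (mΩ := mΩ) μ m ω)) i := by
      have := (EuclideanSpace.proj (𝕜 := ℝ) i).integral_comp_comm e3
      simpa using this
    rw [e2, hproj, ← e1, e4]
    simp
  -- the key vector
  set u : Ω → EuclideanSpace ℝ (Fin d) := fun ω => ‖Y ω‖⁻¹ • Y ω with hu_def
  set h : Ω → EuclideanSpace ℝ (Fin d) := fun ω => (EG ω - ‖Y ω‖) • u ω with hh_def
  have hu_norm_le : ∀ ω, ‖u ω‖ ≤ 1 := by
    intro ω
    rcases eq_or_ne (Y ω) 0 with h0 | h0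
    · simp [hu_def, h0]
    · have : ‖Y ω‖ ≠ 0 := norm_ne_zero_iff.2 h0
      simp [hu_def, norm_smul, abs_of_nonneg (inv_nonneg.2 (norm_nonneg _)),
        inv_mul_cancel₀ this]
  have hu_norm_ae : ∀ᵐ ω ∂μ, ‖u ω‖ = 1 := by
    filter_upwards [hYne] with ω h0
    have : ‖Y ω‖ ≠ 0 := norm_ne_zero_iff.2 h0
    simp [hu_def, norm_smul, abs_of_nonneg (inv_nonneg.2 (norm_nonneg _)),
      inv_mul_cancel₀ this]
  have hEGm : AEStronglyMeasurable EG μ :=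
    (stronglyMeasurable_condExp.mono hm).aestronglyMeasurable
  have hu_meas : AEStronglyMeasurable u μ :=
    ((hY.norm.inv).aemeasurable.smul hY.aemeasurable).aestronglyMeasurable
  have habs_int : Integrable (fun ω => |EG ω - ‖Y ω‖|) μ :=
    (integrable_condExp.sub hYint.norm).abs
  have hh_int : Integrable h μ := by
    refine Integrable.mono' habs_int ((hEGm.sub hY.norm.aestronglyMeasurable).smul hu_meas) ?_
    filter_upwards with ω
    rw [hh_def]
    simp only [norm_smul, Real.norm_eq_abs]
    calc |EG ω - ‖Y ω‖| * ‖u ω‖ ≤ |EG ω - ‖Y ω‖| * 1 := by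
          exact mul_le_mul_of_nonneg_left (hu_norm_le ω) (abs_nonneg _)
      _ = |EG ω - ‖Y ω‖| := mul_one _
  -- main integral identity
  have hkey : ∫ ω, (G ω • S ω - Y ω) ∂μ = ∫ ω, h ω ∂μ := by
    apply PiLp.ext
    intro i
    have hLHS : (∫ ω, (G ω • S ω - Y ω) ∂μ) i
        = ∫ ω, (G ω * S ω i - Y ω i) ∂μ := by
      have := ((EuclideanSpace.proj (𝕜 := ℝ) i).integral_comp_comm (hGSint.sub hYint)).symm
      simpa [smul_eq_mul] using this
    have hRHS : (∫ ω, h ω ∂μ) i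
        = ∫ ω, (EG ω - ‖Y ω‖) * (‖Y ω‖⁻¹ * Y ω i) ∂μ := by
      have := ((EuclideanSpace.proj (𝕜 := ℝ) i).integral_comp_comm hh_int).symm
      simp only [hh_def, hu_def] at this ⊢
      simpa [smul_eq_mul, mul_assoc] using this
    rw [hLHS, hRHS]
    -- compute component integrals
    have hGS_eq : μ[fun ω => G ω * S ω i | m]
        =ᵐ[μ] fun ω => EG ω * (‖Y ω‖⁻¹ * Y ω i) := by
      filter_upwards [hprod i, hSi_cond i] with ω e1 e2
      rw [e1, e2]
    have hI1 : Integrable (fun ω => EG ω * (‖Y ω‖⁻¹ * Y ω i)) μ :=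
      integrable_condExp.congr hGS_eq
    have hYiu : (fun ω => Y ω i) =ᵐ[μ] fun ω => ‖Y ω‖ * (‖Y ω‖⁻¹ * Y ω i) := by
      filter_upwards [hYne] with ω h0
      have : ‖Y ω‖ ≠ 0 := norm_ne_zero_iff.2 h0
      field_simp
    have hI2 : Integrable (fun ω => ‖Y ω‖ * (‖Y ω‖⁻¹ * Y ω i)) μ :=
      (hYi_int i).congr hYiu
    have e1 : ∫ ω, G ω * S ω i ∂μ = ∫ ω, EG ω * (‖Y ω‖⁻¹ * Y ω i) ∂μ := by
      rw [← integral_condExp (f := fun ω => G ω * S ω i) hm]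
      exact integral_congr_ae hGS_eq
    have e2 : ∫ ω, Y ω i ∂μ = ∫ ω, ‖Y ω‖ * (‖Y ω‖⁻¹ * Y ω i) ∂μ :=
      integral_congr_ae hYiu
    rw [integral_sub (hGSi_int i) (hYi_int i), e1, e2, ← integral_sub hI1 hI2]
    congr 1
    ext ω
    ring
  rw [hkey]
  calc ‖∫ ω, h ω ∂μ‖ ≤ ∫ ω, ‖h ω‖ ∂μ := norm_integral_le_integral_norm _
    _ = ∫ ω, |EG ω - ‖Y ω‖| ∂μ := by
        refine integral_congr_ae ?_
        filter_upwards [hu_norm_ae] with ω h1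
        simp [hh_def, norm_smul, h1]

/-- Bias bound for gain-shape quantizers: if the gain `G` and the shape `S` are conditionally
independent given `σ(Y)`, `Y ≠ 0` a.s., and the shape is conditionally unbiased for the unit
vector `Y/‖Y‖₂`, then the norm of the bias of `G • S` is bounded by the expected absolute
conditional bias of the gain: `‖E[G • S - Y]‖₂ ≤ E[|E[G | σ(Y)] - ‖Y‖₂|]`. -/
theorem gain_shape_bias
    {Ω : Type*} {mΩ : MeasurableSpace Ω} [StandardBorelSpace Ω]
    (μ : Measure Ω) [IsProbabilityMeasure μ]
    {d : ℕ}
    (Y : Ω → EuclideanSpace ℝ (Fin d)) (hY : Measurable Y)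
    (hY0 : μ {ω | Y ω = 0} = 0)
    (G : Ω → ℝ) (S : Ω → EuclideanSpace ℝ (Fin d))
    (hG : Measurable G) (hS : Measurable S)
    (hGint : Integrable G μ) (hSint : Integrable S μ) (hYint : Integrable Y μ)
    (hindep : CondIndepFun (MeasurableSpace.comap Y inferInstance) hY.comap_le G S μ)
    (hGSint : Integrable (fun ω => G ω • S ω) μ)
    (hScond : μ[S | MeasurableSpace.comap Y inferInstance]
        =ᵐ[μ] fun ω => ‖Y ω‖⁻¹ • Y ω) :
    ‖∫ ω, (G ω • S ω - Y ω) ∂μ‖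
      ≤ ∫ ω, |(μ[G | MeasurableSpace.comap Y inferInstance]) ω - ‖Y ω‖| ∂μ :=
  gain_shape_bias_aux μ hY.comap_le Y hY hY0 G S hG hS hGint hSint hYint hindep hGSint hScond
end
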